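/- (Squeezing lemma, vector case) Suppose C ≥ 0 is such that for every C¹ vector field q̂ : ℝ² → ℝ² whose fluxes across the edges of K̂ from (0,0) to (0,1) and from (0,0) to (1,0) both vanish, one has ∫_{K̂} |q̂|² dx ≤ C² ∫_{K̂} |∇q̂|_F² dx. Then for all α, β > 0 and every C¹ vector field q : ℝ² → ℝ² whose fluxes across the edges of K_{αβ} from (0,0) to (0,β) and from (0,0) to (α,0) both vanish, one has ∫_{K_{αβ}} |q|² dx ≤ (max{α, β})² C² ∫_{K_{αβ}} |∇q|_F² dx, where K_{αβ} is the triangle with vertices (0,0), (α,0), (0,β). -/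

import Mathlib

open MeasureTheory

noncomputable section

abbrev E2 : Type := EuclideanSpace ℝ (Fin 2)

/-- The point (a, b) in the Euclidean plane. -/
def pt (a b : ℝ) : E2 := WithLp.toLp 2 ![a, b]

/-- First standard basis vector. -/
def vex : E2 := pt 1 0
/-- Second standard basis vector. -/
def vey : E2 := pt 0 1

/-- Euclidean dot product on the plane. -/
def dot2 (v w : E2) : ℝ := v 0 * w 0 + v 1 * w 1

/-- rot (w₁, w₂) = (w₂, −w₁). -/
def rot (w : E2) : E2 := pt (w 1) (-(w 0))

/-- Flux of a vector field across the (oriented) segment from `a` to `b`: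
∫₀¹ q(a + t(b − a)) · rot(b − a) dt, the line integral of the normal component. -/
def flux (q : E2 → E2) (a b : E2) : ℝ :=
  ∫ t in (0:ℝ)..1, dot2 (q (a + t • (b - a))) (rot (b - a))

/-- Squared Euclidean norm of the gradient of a scalar function. -/
def gradSq (v : E2 → ℝ) (x : E2) : ℝ :=
  (fderiv ℝ v x vex) ^ 2 + (fderiv ℝ v x vey) ^ 2

/-- Gradient vector of a scalar function. -/
def gradVec (v : E2 → ℝ) (x : E2) : E2 :=
  pt (fderiv ℝ v x vex) (fderiv ℝ v x vey)

/-- Squared Frobenius norm of the Jacobian of a vector field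
(sum of squares of the four first-order partial derivatives). -/
def frobSq (q : E2 → E2) (x : E2) : ℝ :=
  (fderiv ℝ q x vex 0) ^ 2 + (fderiv ℝ q x vey 0) ^ 2 +
  (fderiv ℝ q x vex 1) ^ 2 + (fderiv ℝ q x vey 1) ^ 2

/-- Divergence of a planar vector field. -/
def divg (q : E2 → E2) (x : E2) : ℝ := fderiv ℝ q x vex 0 + fderiv ℝ q x vey 1

/-- The reference triangle with vertices (0,0), (1,0), (0,1). -/
def Khat : Set E2 := convexHull ℝ {pt 0 0, pt 1 0, pt 0 1}

/-- The triangle with vertices (0,0), (α,0), (0,β). -/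
def Kab (a b : ℝ) : Set E2 := convexHull ℝ {pt 0 0, pt a 0, pt 0 b}

/-- Matrix–vector multiplication for 2×2 matrices acting on the plane. -/
def matVec (A : Matrix (Fin 2) (Fin 2) ℝ) (x : E2) : E2 :=
  pt (A 0 0 * x 0 + A 0 1 * x 1) (A 1 0 * x 0 + A 1 1 * x 1)

/-- Squared Frobenius norm of a 2×2 matrix. -/
def mFrobSq (M : Matrix (Fin 2) (Fin 2) ℝ) : ℝ :=
  M 0 0 ^ 2 + M 0 1 ^ 2 + M 1 0 ^ 2 + M 1 1 ^ 2

/-!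
The diagonal map `S (x, y) = (α x, β y)` carries `K̂` onto `K_{αβ}` with Jacobian `α β`, and the
leg fluxes of `q` across `K_{αβ}` are `β` and `α` times those of `q ∘ S` across `K̂`. By the chain
rule `|∇(q ∘ S)|_F² ≤ max(α, β)² |∇q|_F² ∘ S`, so the reference inequality for `q ∘ S`, pushed
forward by the change of variables, gives the claim.
-/

@[simp] lemma pt_apply_zero (a b : ℝ) : pt a b 0 = a := rfl

@[simp] lemma pt_apply_one (a b : ℝ) : pt a b 1 = b := rfl

lemma pt_add_pt (a b c d : ℝ) : pt a b + pt c d = pt (a + c) (b + d) := by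
  ext i; fin_cases i <;> simp [pt]

lemma pt_sub_pt (a b c d : ℝ) : pt a b - pt c d = pt (a - c) (b - d) := by
  ext i; fin_cases i <;> simp [pt]

lemma smul_pt (t a b : ℝ) : t • pt a b = pt (t * a) (t * b) := by
  ext i; fin_cases i <;> simp [pt]

lemma isCompact_Khat : IsCompact Khat :=
  (Set.toFinite _).isCompact_convexHull ℝ

lemma measurableSet_Khat : MeasurableSet Khat :=
  isCompact_Khat.isClosed.measurableSet

section diagScale

def diagScale (α β : ℝ) : E2 →L[ℝ] E2 :=
  LinearMap.toContinuousLinearMap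
    { toFun := fun x => pt (α * x 0) (β * x 1)
      map_add' := fun x y => by ext i; fin_cases i <;> simp [pt] <;> ring
      map_smul' := fun c x => by ext i; fin_cases i <;> simp [pt] <;> ring }

variable (α β : ℝ)

lemma diagScale_apply (x : E2) : diagScale α β x = pt (α * x 0) (β * x 1) := rfl

lemma det_diagScale : (diagScale α β).det = α * β := by
  rw [ContinuousLinearMap.det, ← LinearMap.det_toMatrix (PiLp.basisFun 2 ℝ (Fin 2)),
    Matrix.det_fin_two]
  simp [LinearMap.toMatrix_apply, diagScale_apply, pt]

lemma diagScale_vex : diagScale α β vex = α • vex := by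
  ext i; fin_cases i <;> simp [diagScale_apply, vex, pt]

lemma diagScale_vey : diagScale α β vey = β • vey := by
  ext i; fin_cases i <;> simp [diagScale_apply, vey, pt]

lemma diagScale_injective {α β : ℝ} (hα : α ≠ 0) (hβ : β ≠ 0) :
    Function.Injective (diagScale α β) := by
  intro x y h
  have h0 := congrArg (· 0) h
  have h1 := congrArg (· 1) h
  simp only [diagScale_apply, pt_apply_zero, pt_apply_one] at h0 h1
  ext i; fin_cases i
  · exact mul_left_cancel₀ hα h0
  · exact mul_left_cancel₀ hβ h1

lemma image_diagScale_Khat : diagScale α β '' Khat = Kab α β := by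
  rw [Khat, Kab, ← ContinuousLinearMap.coe_coe, LinearMap.image_convexHull]
  simp [Set.image_insert_eq, diagScale_apply]

end diagScale

lemma setIntegral_Kab_eq {α β : ℝ} (hα : 0 < α) (hβ : 0 < β) (g : E2 → ℝ) :
    ∫ x in Kab α β, g x = α * β * ∫ x in Khat, g (diagScale α β x) := by
  rw [← image_diagScale_Khat, integral_image_eq_integral_abs_det_fderiv_smul volume
    measurableSet_Khat (fun x _ => (diagScale α β).hasFDerivAt.hasFDerivWithinAt)
    (diagScale_injective hα.ne' hβ.ne').injOn g]
  simp only [det_diagScale, abs_of_pos (mul_pos hα hβ), smul_eq_mul, integral_const_mul]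

lemma flux_vertical_leg (α β : ℝ) (q : E2 → E2) :
    flux q (pt 0 0) (pt 0 β) = β * flux (fun y => q (diagScale α β y)) (pt 0 0) (pt 0 1) := by
  rw [flux, flux, ← intervalIntegral.integral_const_mul]
  refine intervalIntegral.integral_congr fun t _ => ?_
  simp [diagScale_apply, pt_sub_pt, pt_add_pt, smul_pt, rot, dot2, mul_comm]

lemma flux_horizontal_leg (α β : ℝ) (q : E2 → E2) :
    flux q (pt 0 0) (pt α 0) = α * flux (fun y => q (diagScale α β y)) (pt 0 0) (pt 1 0) := by
  rw [flux, flux, ← intervalIntegral.integral_const_mul]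
  refine intervalIntegral.integral_congr fun t _ => ?_
  simp [diagScale_apply, pt_sub_pt, pt_add_pt, smul_pt, rot, dot2, mul_comm]

lemma frobSq_comp_diagScale_le {α β : ℝ} (hα : 0 ≤ α) (hβ : 0 ≤ β) {q : E2 → E2} {x : E2}
    (hq : DifferentiableAt ℝ q (diagScale α β x)) :
    frobSq (fun y => q (diagScale α β y)) x ≤ max α β ^ 2 * frobSq q (diagScale α β x) := by
  rw [frobSq, frobSq, fderiv_fun_comp x hq (diagScale α β).differentiableAt,
    ContinuousLinearMap.fderiv]
  simp only [ContinuousLinearMap.comp_apply, diagScale_vex, diagScale_vey, map_smul,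
    PiLp.smul_apply, smul_eq_mul]
  have hα2 : α ^ 2 ≤ max α β ^ 2 := pow_le_pow_left₀ hα (le_max_left α β) 2
  have hβ2 : β ^ 2 ≤ max α β ^ 2 := pow_le_pow_left₀ hβ (le_max_right α β) 2
  set D := fderiv ℝ q (diagScale α β x)
  nlinarith [mul_le_mul_of_nonneg_right hα2 (sq_nonneg (D vex 0)),
    mul_le_mul_of_nonneg_right hβ2 (sq_nonneg (D vey 0)),
    mul_le_mul_of_nonneg_right hα2 (sq_nonneg (D vex 1)),
    mul_le_mul_of_nonneg_right hβ2 (sq_nonneg (D vey 1))]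

lemma continuous_frobSq {q : E2 → E2} (hq : ContDiff ℝ 1 q) : Continuous (frobSq q) := by
  have hD : ∀ (v : E2) (i : Fin 2), Continuous fun x => fderiv ℝ q x v i := fun v i =>
    (continuous_apply i).comp <| (PiLp.continuous_ofLp 2 _).comp <|
      (hq.continuous_fderiv one_ne_zero).clm_apply continuous_const
  unfold frobSq
  fun_prop

lemma setIntegral_frobSq_comp_diagScale_le {α β : ℝ} (hα : 0 ≤ α) (hβ : 0 ≤ β) {q : E2 → E2}
    (hq : ContDiff ℝ 1 q) :
    ∫ x in Khat, frobSq (fun y => q (diagScale α β y)) x ≤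
      max α β ^ 2 * ∫ x in Khat, frobSq q (diagScale α β x) := by
  rw [← integral_const_mul]
  refine setIntegral_mono_on ?_ ?_ measurableSet_Khat fun x _ =>
    frobSq_comp_diagScale_le hα hβ (hq.differentiable one_ne_zero _)
  · exact (continuous_frobSq (hq.comp (diagScale α β).contDiff)).continuousOn
      |>.integrableOn_compact isCompact_Khat
  · exact (continuous_const.mul ((continuous_frobSq hq).comp (diagScale α β).continuous))
      |>.continuousOn.integrableOn_compact isCompact_Khat

theorem stmt10_general (C : ℝ)
    (href : ∀ q : E2 → E2, ContDiff ℝ 1 q →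
      flux q (pt 0 0) (pt 0 1) = 0 → flux q (pt 0 0) (pt 1 0) = 0 →
      (∫ x in Khat, dot2 (q x) (q x)) ≤ C ^ 2 * ∫ x in Khat, frobSq q x) :
    ∀ α β : ℝ, 0 < α → 0 < β →
      ∀ q : E2 → E2, ContDiff ℝ 1 q →
        flux q (pt 0 0) (pt 0 β) = 0 → flux q (pt 0 0) (pt α 0) = 0 →
        (∫ x in Kab α β, dot2 (q x) (q x)) ≤
          (max α β) ^ 2 * C ^ 2 * ∫ x in Kab α β, frobSq q x := by
  intro α β hα hβ q hq hfy hfx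
  have hp : ContDiff ℝ 1 fun y => q (diagScale α β y) := hq.comp (diagScale α β).contDiff
  have href_p := href _ hp (by simpa [flux_vertical_leg α β, hβ.ne'] using hfy)
    (by simpa [flux_horizontal_leg α β, hα.ne'] using hfx)
  rw [setIntegral_Kab_eq hα hβ, setIntegral_Kab_eq hα hβ]
  calc α * β * ∫ x in Khat, dot2 (q (diagScale α β x)) (q (diagScale α β x))
      ≤ α * β * (C ^ 2 * (max α β ^ 2 * ∫ x in Khat, frobSq q (diagScale α β x))) := by
        gcongr
        exact href_p.trans <| mul_le_mul_of_nonneg_left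
          (setIntegral_frobSq_comp_diagScale_le hα.le hβ.le hq) (sq_nonneg C)
    _ = max α β ^ 2 * C ^ 2 * (α * β * ∫ x in Khat, frobSq q (diagScale α β x)) := by ring

/-- Squeezing lemma, vector case: the constant `C` of the Babuška–Aziz-type
inequality for vector fields with vanishing fluxes across the two legs of the
reference triangle yields the constant `max{α,β} C` on the squeezed triangle
`K_{αβ}`. -/
theorem stmt10 (C : ℝ) (hC : 0 ≤ C)
    (href : ∀ q : E2 → E2, ContDiff ℝ 1 q →
      flux q (pt 0 0) (pt 0 1) = 0 → flux q (pt 0 0) (pt 1 0) = 0 →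
      (∫ x in Khat, dot2 (q x) (q x)) ≤ C ^ 2 * ∫ x in Khat, frobSq q x) :
    ∀ α β : ℝ, 0 < α → 0 < β →
      ∀ q : E2 → E2, ContDiff ℝ 1 q →
        flux q (pt 0 0) (pt 0 β) = 0 → flux q (pt 0 0) (pt α 0) = 0 →
        (∫ x in Kab α β, dot2 (q x) (q x)) ≤
          (max α β) ^ 2 * C ^ 2 * ∫ x in Kab α β, frobSq q x :=
  stmt10_general C href

end
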